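/- arXiv:1001.4683 — 2 statements merged into one kernel-verified Lean document; each statement's English description precedes it below -/
import Mathlib

section
/- Let {C̃, C̃₁} be a dual Mannheim pair with constant offset λ̃ ≠ 0. If t̃ = cos θ̃ t̃₁ + sin θ̃ ñ₁ with dual angle θ̃, then cos θ̃ = ds̃₁/ds̃, sin θ̃ = −λ̃τ̃₁ ds̃₁/ds̃, cos θ̃ = (1 + λ̃κ̃) ds̃/ds̃₁, sin θ̃ = λ̃τ̃ ds̃/ds̃₁, and consequently the torsion of C̃₁ satisfies τ̃₁ = κ̃/(λ̃τ̃). -/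
/-!
Differentiating `α = α₁ + λ̃ b̃₁` and writing `t̃` in the frame `(t̃₁, ñ₁)` gives the first two
relations. Differentiating `ñ = b̃₁` in both Frenet frames gives `σ (κ̃ cos θ̃ + τ̃ sin θ̃) = 0` and
`σ (τ̃ cos θ̃ − κ̃ sin θ̃) = −σ₁ τ̃₁`, hence `λ̃ τ̃ τ̃₁ = κ̃` and `τ̃ = −τ̃₁ (1 + λ̃ κ̃)`. Without
`cos² θ̃ + sin² θ̃ = 1` these do not determine `cos θ̃ σ₁`; the missing relation
`σ τ̃ + cos θ̃ σ₁ τ̃₁ = 0` comes from differentiating `b̃ · b̃₁ ≡ 0`.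
-/

open TrivSqZeroExt DualNumber

/-- The dual space `D³`. -/
abbrev D3 : Type := Fin 3 → DualNumber ℝ

/-- The dual scalar product on `D³`. -/
noncomputable def dualDot (v w : D3) : DualNumber ℝ := ∑ i, v i * w i

theorem dualDot_eq_dotProduct (v w : D3) : dualDot v w = v ⬝ᵥ w := rfl

section Deriv

variable {𝕜 𝔸 ι : Type*} [NontriviallyNormedField 𝕜] [NormedCommRing 𝔸] [NormedAlgebra 𝕜 𝔸]
  [Fintype ι] {u v : 𝕜 → ι → 𝔸} {u' v' : ι → 𝔸} {x : 𝕜}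

theorem HasDerivAt.dotProduct (hu : HasDerivAt u u' x) (hv : HasDerivAt v v' x) :
    HasDerivAt (fun s => u s ⬝ᵥ v s) (u' ⬝ᵥ v x + u x ⬝ᵥ v') x := by
  unfold _root_.dotProduct
  rw [← Finset.sum_add_distrib]
  exact HasDerivAt.fun_sum fun i _ => (hasDerivAt_pi.mp hu i).mul (hasDerivAt_pi.mp hv i)

theorem HasDerivAt.dotProduct_add_dotProduct_eq_zero (h : ∀ s, u s ⬝ᵥ v s = 0)
    (hu : HasDerivAt u u' x) (hv : HasDerivAt v v' x) : u' ⬝ᵥ v x + u x ⬝ᵥ v' = 0 :=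
  (hu.dotProduct hv).unique (by simp_rw [h]; exact hasDerivAt_const x 0)

end Deriv

section OrthonormalPair

variable {R ι : Type*} [CommRing R] [Fintype ι] {e₁ e₂ : ι → R}

theorem smul_add_smul_dotProduct_fst (h₁₁ : e₁ ⬝ᵥ e₁ = 1) (h₂₁ : e₂ ⬝ᵥ e₁ = 0) (a b : R) :
    (a • e₁ + b • e₂) ⬝ᵥ e₁ = a := by
  simp [add_dotProduct, h₁₁, h₂₁]

theorem smul_add_smul_dotProduct_snd (h₁₂ : e₁ ⬝ᵥ e₂ = 0) (h₂₂ : e₂ ⬝ᵥ e₂ = 1) (a b : R) :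
    (a • e₁ + b • e₂) ⬝ᵥ e₂ = b := by
  simp [add_dotProduct, h₁₂, h₂₂]

theorem smul_add_smul_dotProduct_eq_zero {v : ι → R} (h₁ : e₁ ⬝ᵥ v = 0) (h₂ : e₂ ⬝ᵥ v = 0)
    (a b : R) : (a • e₁ + b • e₂) ⬝ᵥ v = 0 := by
  simp [add_dotProduct, h₁, h₂]

theorem eq_and_eq_of_smul_add_smul_eq (h₁₁ : e₁ ⬝ᵥ e₁ = 1) (h₂₂ : e₂ ⬝ᵥ e₂ = 1)
    (h₁₂ : e₁ ⬝ᵥ e₂ = 0) {a b a' b' : R} (h : a • e₁ + b • e₂ = a' • e₁ + b' • e₂) :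
    a = a' ∧ b = b' := by
  have h₂₁ : e₂ ⬝ᵥ e₁ = 0 := dotProduct_comm e₂ e₁ ▸ h₁₂
  constructor
  · rw [← smul_add_smul_dotProduct_fst h₁₁ h₂₁ a b, h, smul_add_smul_dotProduct_fst h₁₁ h₂₁]
  · rw [← smul_add_smul_dotProduct_snd h₁₂ h₂₂ a b, h, smul_add_smul_dotProduct_snd h₁₂ h₂₂]

end OrthonormalPair

theorem mannheim_scalar_relations {R : Type*} [CommRing R] {c s σ σ₁ κ τ τ₁ lam : R}
    (hσ₁ : IsUnit σ₁) (hτ : IsUnit τ) (h₁ : c * σ = σ₁) (h₂ : s * σ = -(lam * τ₁ * σ₁))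
    (hC : σ * -(κ * c + τ * s) = 0) (hD : σ * (τ * c - κ * s) = -(σ₁ * τ₁))
    (hE : σ * τ + c * σ₁ * τ₁ = 0) :
    c * σ₁ = (1 + lam * κ) * σ ∧ s * σ₁ = lam * τ * σ ∧ lam * τ * τ₁ = κ := by
  have hττ₁ : τ = τ₁ * -(1 + lam * κ) := by
    refine hσ₁.mul_left_cancel ?_
    linear_combination hD + κ * h₂ - τ * h₁
  have hτ₁ : IsUnit τ₁ := isUnit_of_mul_isUnit_left (hττ₁ ▸ hτ)
  refine ⟨hτ₁.mul_left_cancel ?_, ?_, hσ₁.mul_left_cancel ?_⟩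
  · linear_combination hE - σ * hττ₁
  · linear_combination -(s * h₁) + c * h₂ - lam * hE
  · linear_combination τ * h₂ + κ * h₁ + hC

/-- `σ = ds̃/ds` and `σ₁ = ds̃₁/ds` are the dual speeds with respect to a common real parameter,
so that e.g. `cos θ̃ = ds̃₁/ds̃` reads `cos θ̃ · σ = σ₁`. -/
theorem dual_mannheim_torsion_general
    (α α₁ t n b t₁ n₁ b₁ : ℝ → D3)
    (κ τ τ₁ σ σ₁ cosθ sinθ : ℝ → DualNumber ℝ) (lam : DualNumber ℝ)
    (hrel : ∀ s, α s = α₁ s + lam • b₁ s)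
    (hα : ∀ s, HasDerivAt α (σ s • t s) s)
    (hn : ∀ s, HasDerivAt n (σ s • (-(κ s • t s) + τ s • b s)) s)
    (hb : ∀ s, HasDerivAt b (σ s • (-(τ s • n s))) s)
    (hα₁ : ∀ s, HasDerivAt α₁ (σ₁ s • t₁ s) s)
    (hb₁ : ∀ s, HasDerivAt b₁ (σ₁ s • (-(τ₁ s • n₁ s))) s)
    (hnb₁ : ∀ s, n s = b₁ s)
    (hframe : ∀ s, t s = cosθ s • t₁ s + sinθ s • n₁ s)
    (hframe' : ∀ s, b s = -(sinθ s • t₁ s) + cosθ s • n₁ s)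
    (ht₁unit : ∀ s, dualDot (t₁ s) (t₁ s) = 1)
    (hn₁unit : ∀ s, dualDot (n₁ s) (n₁ s) = 1)
    (hb₁unit : ∀ s, dualDot (b₁ s) (b₁ s) = 1)
    (ht₁n₁ : ∀ s, dualDot (t₁ s) (n₁ s) = 0)
    (ht₁b₁ : ∀ s, dualDot (t₁ s) (b₁ s) = 0)
    (hn₁b₁ : ∀ s, dualDot (n₁ s) (b₁ s) = 0)
    (hσ₁ : ∀ s, IsUnit (σ₁ s))
    (hτ : ∀ s, IsUnit (τ s)) :
    (∀ s, cosθ s * σ s = σ₁ s) ∧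
    (∀ s, sinθ s * σ s = -(lam * τ₁ s * σ₁ s)) ∧
    (∀ s, cosθ s * σ₁ s = (1 + lam * κ s) * σ s) ∧
    (∀ s, sinθ s * σ₁ s = lam * τ s * σ s) ∧
    (∀ s, lam * τ s * τ₁ s = κ s) := by
  simp only [dualDot_eq_dotProduct] at *
  obtain rfl : α = fun s => α₁ s + lam • b₁ s := funext hrel
  obtain rfl : b₁ = n := (funext hnb₁).symm
  simp only [← neg_smul] at hframe'
  have hbb₁ (s : ℝ) : b s ⬝ᵥ b₁ s = 0 := by
    rw [hframe' s]
    exact smul_add_smul_dotProduct_eq_zero (ht₁b₁ s) (hn₁b₁ s) _ _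
  have key (s : ℝ) : (cosθ s * σ s = σ₁ s ∧ sinθ s * σ s = -(lam * τ₁ s * σ₁ s)) ∧
      cosθ s * σ₁ s = (1 + lam * κ s) * σ s ∧ sinθ s * σ₁ s = lam * τ s * σ s ∧
      lam * τ s * τ₁ s = κ s := by
    have hV₁ : (cosθ s * σ s) • t₁ s + (sinθ s * σ s) • n₁ s =
        σ₁ s • t₁ s + (-(lam * τ₁ s * σ₁ s)) • n₁ s := by
      have h := (hα s).unique ((hα₁ s).add ((hb₁ s).const_smul lam))
      rw [hframe s] at h
      linear_combination (norm := module) h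
    have hV₂ : (σ s * -(κ s * cosθ s + τ s * sinθ s)) • t₁ s +
        (σ s * (τ s * cosθ s - κ s * sinθ s)) • n₁ s = (0 : DualNumber ℝ) • t₁ s +
        (-(σ₁ s * τ₁ s)) • n₁ s := by
      have h := (hn s).unique (hb₁ s)
      rw [hframe s, hframe' s] at h
      linear_combination (norm := module) h
    obtain ⟨h₁, h₂⟩ := eq_and_eq_of_smul_add_smul_eq (ht₁unit s) (hn₁unit s) (ht₁n₁ s) hV₁
    obtain ⟨hC, hD⟩ := eq_and_eq_of_smul_add_smul_eq (ht₁unit s) (hn₁unit s) (ht₁n₁ s) hV₂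
    have hE : σ s * τ s + cosθ s * σ₁ s * τ₁ s = 0 := by
      have h := HasDerivAt.dotProduct_add_dotProduct_eq_zero hbb₁ (hb s) (hb₁ s)
      have hbn₁ : b s ⬝ᵥ n₁ s = cosθ s := by
        rw [hframe' s]
        exact smul_add_smul_dotProduct_snd (ht₁n₁ s) (hn₁unit s) _ _
      simp only [smul_neg, neg_dotProduct, smul_dotProduct, dotProduct_neg, dotProduct_smul,
        hb₁unit s, hbn₁, smul_eq_mul, mul_one] at h
      linear_combination -h
    exact ⟨⟨h₁, h₂⟩, mannheim_scalar_relations (hσ₁ s) (hτ s) h₁ h₂ hC hD hE⟩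
  exact ⟨fun s => (key s).1.1, fun s => (key s).1.2, fun s => (key s).2.1,
    fun s => (key s).2.2.1, fun s => (key s).2.2.2⟩

/-- For a dual Mannheim pair `{C̃, C̃₁}` with constant offset `λ̃ ≠ 0` and
`t̃ = cos θ̃ t̃₁ + sin θ̃ ñ₁`: `cos θ̃ = ds̃₁/ds̃`, `sin θ̃ = −λ̃τ̃₁ ds̃₁/ds̃`,
`cos θ̃ = (1 + λ̃κ̃) ds̃/ds̃₁`, `sin θ̃ = λ̃τ̃ ds̃/ds̃₁`, and `τ̃₁ = κ̃/(λ̃τ̃)`.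
Both curves are parameterized by a common real parameter, `σ = ds̃/ds` and
`σ₁ = ds̃₁/ds` being the dual speeds, so that e.g. `cos θ̃ = ds̃₁/ds̃` reads
`cos θ̃ · σ = σ₁`. -/
theorem dual_mannheim_torsion
    (α α₁ t n b t₁ n₁ b₁ : ℝ → D3)
    (κ τ κ₁ τ₁ σ σ₁ cosθ sinθ : ℝ → DualNumber ℝ) (lam : DualNumber ℝ)
    (hlam : lam ≠ 0)
    (hrel : ∀ s, α s = α₁ s + lam • b₁ s)
    (hα : ∀ s, HasDerivAt α (σ s • t s) s)
    (ht : ∀ s, HasDerivAt t (σ s • (κ s • n s)) s)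
    (hn : ∀ s, HasDerivAt n (σ s • (-(κ s • t s) + τ s • b s)) s)
    (hb : ∀ s, HasDerivAt b (σ s • (-(τ s • n s))) s)
    (hα₁ : ∀ s, HasDerivAt α₁ (σ₁ s • t₁ s) s)
    (ht₁ : ∀ s, HasDerivAt t₁ (σ₁ s • (κ₁ s • n₁ s)) s)
    (hn₁ : ∀ s, HasDerivAt n₁ (σ₁ s • (-(κ₁ s • t₁ s) + τ₁ s • b₁ s)) s)
    (hb₁ : ∀ s, HasDerivAt b₁ (σ₁ s • (-(τ₁ s • n₁ s))) s)
    (hnb₁ : ∀ s, n s = b₁ s)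
    (hframe : ∀ s, t s = cosθ s • t₁ s + sinθ s • n₁ s)
    (hframe' : ∀ s, b s = -(sinθ s • t₁ s) + cosθ s • n₁ s)
    (ht₁unit : ∀ s, dualDot (t₁ s) (t₁ s) = 1)
    (hn₁unit : ∀ s, dualDot (n₁ s) (n₁ s) = 1)
    (hb₁unit : ∀ s, dualDot (b₁ s) (b₁ s) = 1)
    (ht₁n₁ : ∀ s, dualDot (t₁ s) (n₁ s) = 0)
    (ht₁b₁ : ∀ s, dualDot (t₁ s) (b₁ s) = 0)
    (hn₁b₁ : ∀ s, dualDot (n₁ s) (b₁ s) = 0)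
    (hσ : ∀ s, IsUnit (σ s)) (hσ₁ : ∀ s, IsUnit (σ₁ s))
    (hτ : ∀ s, IsUnit (τ s)) :
    (∀ s, cosθ s * σ s = σ₁ s) ∧
    (∀ s, sinθ s * σ s = -(lam * τ₁ s * σ₁ s)) ∧
    (∀ s, cosθ s * σ₁ s = (1 + lam * κ s) * σ s) ∧
    (∀ s, sinθ s * σ₁ s = lam * τ s * σ s) ∧
    (∀ s, lam * τ s * τ₁ s = κ s) :=
  dual_mannheim_torsion_general α α₁ t n b t₁ n₁ b₁ κ τ τ₁ σ σ₁ cosθ sinθ lam hrel hα hn hb hα₁ hb₁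
    hnb₁ hframe hframe' ht₁unit hn₁unit hb₁unit ht₁n₁ ht₁b₁ hn₁b₁ hσ₁ hτ
end

section
/- Let {C̃, C̃₁} be a dual Mannheim pair with frames related by t̃₁ = cos θ̃ t̃ − sin θ̃ b̃ and ñ₁ = sin θ̃ t̃ + cos θ̃ b̃ (and ñ parallel to b̃₁). Then κ̃₁ = −dθ̃/ds̃₁, τ̃₁ = (sin θ̃ κ̃ − cos θ̃ τ̃) ds̃/ds̃₁, κ̃ = sin θ̃ τ̃₁ ds̃₁/ds̃, and τ̃ = −cos θ̃ τ̃₁ ds̃₁/ds̃. -/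
/-!
Differentiating `t̃₁ = cos θ̃ t̃ − sin θ̃ b̃`, `ñ₁ = sin θ̃ t̃ + cos θ̃ b̃` with the Frenet formulas
of `C̃` gives `t̃₁' = −θ̃' ñ₁ + σ (κ̃ cos θ̃ + τ̃ sin θ̃) ñ` and
`ñ₁' = θ̃' t̃₁ + σ (κ̃ sin θ̃ − τ̃ cos θ̃) ñ`, while `b̃₁ = ñ` gives `b̃₁' = ñ'`. Comparing with the
Frenet formulas of `C̃₁` and taking dual scalar products with `ñ₁`, `ñ`, `t̃` and `b̃` reads off
the four relations; this uses that `(t̃₁, ñ₁, ñ)` is again orthonormal, by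
`sin² θ̃ + cos² θ̃ = 1`.
-/

open TrivSqZeroExt DualNumber

/-- The sine and cosine of a dual number, via the Taylor extension. -/
noncomputable def dualSin (z : DualNumber ℝ) : DualNumber ℝ :=
  inl (Real.sin z.fst) + inl (z.snd * Real.cos z.fst) * ε

noncomputable def dualCos (z : DualNumber ℝ) : DualNumber ℝ :=
  inl (Real.cos z.fst) - inl (z.snd * Real.sin z.fst) * ε

@[simp] lemma fst_dualSin (z : DualNumber ℝ) : (dualSin z).fst = Real.sin z.fst := by
  simp [dualSin]

@[simp] lemma snd_dualSin (z : DualNumber ℝ) : (dualSin z).snd = z.snd * Real.cos z.fst := by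
  simp [dualSin]

@[simp] lemma fst_dualCos (z : DualNumber ℝ) : (dualCos z).fst = Real.cos z.fst := by
  simp [dualCos]

@[simp] lemma snd_dualCos (z : DualNumber ℝ) : (dualCos z).snd = -(z.snd * Real.sin z.fst) := by
  simp [dualCos]

lemma dualSin_sq_add_dualCos_sq (z : DualNumber ℝ) : dualSin z ^ 2 + dualCos z ^ 2 = 1 := by
  ext
  · simpa [pow_two] using Real.sin_sq_add_cos_sq z.fst
  · simp only [pow_two, snd_add, DualNumber.snd_mul, fst_dualSin, snd_dualSin, fst_dualCos,
      snd_dualCos, snd_one]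
    ring

lemma HasDerivAt.dualNumber_fst {F : ℝ → DualNumber ℝ} {F' : DualNumber ℝ} {s : ℝ}
    (h : HasDerivAt F F' s) : HasDerivAt (fun u => (F u).fst) F'.fst s :=
  (fstCLM ℝ ℝ).hasFDerivAt.comp_hasDerivAt s h

lemma HasDerivAt.dualNumber_snd {F : ℝ → DualNumber ℝ} {F' : DualNumber ℝ} {s : ℝ}
    (h : HasDerivAt F F' s) : HasDerivAt (fun u => (F u).snd) F'.snd s :=
  (sndCLM ℝ ℝ).hasFDerivAt.comp_hasDerivAt s h

lemma DualNumber.hasDerivAt_of_fst_snd {F : ℝ → DualNumber ℝ} {F' : DualNumber ℝ} {s : ℝ}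
    (h₁ : HasDerivAt (fun u => (F u).fst) F'.fst s)
    (h₂ : HasDerivAt (fun u => (F u).snd) F'.snd s) :
    HasDerivAt F F' s := by
  have hF : F = fun u => inlCLM ℝ ℝ (F u).fst + inrCLM ℝ ℝ (F u).snd :=
    funext fun u => (inl_fst_add_inr_snd_eq (F u)).symm
  rw [hF, ← inl_fst_add_inr_snd_eq F']
  exact ((inlCLM ℝ ℝ).hasFDerivAt.comp_hasDerivAt s h₁).add
    ((inrCLM ℝ ℝ).hasFDerivAt.comp_hasDerivAt s h₂)

lemma HasDerivAt.dualSin {θ : ℝ → DualNumber ℝ} {θ' : DualNumber ℝ} {s : ℝ}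
    (h : HasDerivAt θ θ' s) :
    HasDerivAt (fun u => _root_.dualSin (θ u)) (θ' * _root_.dualCos (θ s)) s := by
  refine DualNumber.hasDerivAt_of_fst_snd ?_ ?_
  · simpa only [fst_dualSin, fst_mul, fst_dualCos, mul_comm] using h.dualNumber_fst.sin
  · refine (by simpa only [snd_dualSin] using h.dualNumber_snd.fun_mul h.dualNumber_fst.cos :
      HasDerivAt _ _ s).congr_deriv ?_
    simp only [DualNumber.snd_mul, fst_dualCos, snd_dualCos]
    ring

lemma HasDerivAt.dualCos {θ : ℝ → DualNumber ℝ} {θ' : DualNumber ℝ} {s : ℝ}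
    (h : HasDerivAt θ θ' s) :
    HasDerivAt (fun u => _root_.dualCos (θ u)) (-(θ' * _root_.dualSin (θ s))) s := by
  refine DualNumber.hasDerivAt_of_fst_snd ?_ ?_
  · simpa only [fst_dualCos, fst_neg, fst_mul, fst_dualSin, mul_comm, mul_neg] using
      h.dualNumber_fst.cos
  · refine (by simpa only [snd_dualCos] using
      (h.dualNumber_snd.fun_mul h.dualNumber_fst.sin).fun_neg : HasDerivAt _ _ s).congr_deriv ?_
    simp only [snd_neg, DualNumber.snd_mul, fst_dualSin, snd_dualSin]
    ring

lemma dualDot_comm (v w : D3) : dualDot v w = dualDot w v := dotProduct_comm v w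

lemma dualDot_add_left (u v w : D3) : dualDot (u + v) w = dualDot u w + dualDot v w :=
  add_dotProduct u v w

lemma dualDot_sub_left (u v w : D3) : dualDot (u - v) w = dualDot u w - dualDot v w :=
  sub_dotProduct u v w

lemma dualDot_smul_left (c : DualNumber ℝ) (v w : D3) : dualDot (c • v) w = c * dualDot v w :=
  smul_dotProduct c v w

lemma dualDot_add_right (u v w : D3) : dualDot u (v + w) = dualDot u v + dualDot u w :=
  dotProduct_add u v w

lemma dualDot_sub_right (u v w : D3) : dualDot u (v - w) = dualDot u v - dualDot u w :=
  dotProduct_sub u v w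

lemma dualDot_neg_right (v w : D3) : dualDot v (-w) = -dualDot v w :=
  dotProduct_neg v w

lemma dualDot_smul_right (c : DualNumber ℝ) (v w : D3) : dualDot v (c • w) = c * dualDot v w :=
  dotProduct_smul c v w

structure DualOrthonormal (e₁ e₂ e₃ : D3) : Prop where
  unit₁ : dualDot e₁ e₁ = 1
  unit₂ : dualDot e₂ e₂ = 1
  unit₃ : dualDot e₃ e₃ = 1
  orth₁₂ : dualDot e₁ e₂ = 0
  orth₁₃ : dualDot e₁ e₃ = 0
  orth₂₃ : dualDot e₂ e₃ = 0

namespace DualOrthonormal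

variable {e₁ e₂ e₃ : D3}

lemma orth₃₁ (h : DualOrthonormal e₁ e₂ e₃) : dualDot e₃ e₁ = 0 := by
  rw [dualDot_comm, h.orth₁₃]

lemma orth₃₂ (h : DualOrthonormal e₁ e₂ e₃) : dualDot e₃ e₂ = 0 := by
  rw [dualDot_comm, h.orth₂₃]

lemma rotate (h : DualOrthonormal e₁ e₂ e₃) (θ : DualNumber ℝ) :
    DualOrthonormal (dualCos θ • e₁ - dualSin θ • e₃) (dualSin θ • e₁ + dualCos θ • e₃) e₂ := by
  have hsc := dualSin_sq_add_dualCos_sq θ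
  refine ⟨?_, ?_, h.unit₂, ?_, ?_, ?_⟩ <;>
  simp only [dualDot_add_left, dualDot_sub_left, dualDot_smul_left, dualDot_add_right,
    dualDot_sub_right, dualDot_smul_right, h.unit₁, h.unit₃, h.orth₁₂, h.orth₁₃, h.orth₃₁,
    h.orth₃₂]
  · linear_combination hsc
  · linear_combination hsc
  all_goals ring

end DualOrthonormal

section RotatedFrame

variable {t n b : ℝ → D3} {θ : ℝ → DualNumber ℝ} {σ κ τ θ' : DualNumber ℝ} {s : ℝ}

lemma hasDerivAt_cos_smul_sub_sin_smul (ht : HasDerivAt t (σ • (κ • n s)) s)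
    (hb : HasDerivAt b (σ • (-(τ • n s))) s) (hθ : HasDerivAt θ θ' s) :
    HasDerivAt (fun u => dualCos (θ u) • t u - dualSin (θ u) • b u)
      (-θ' • (dualSin (θ s) • t s + dualCos (θ s) • b s)
        + (σ * (dualCos (θ s) * κ + dualSin (θ s) * τ)) • n s) s :=
  ((hθ.dualCos.fun_smul ht).fun_sub (hθ.dualSin.fun_smul hb)).congr_deriv (by module)

lemma hasDerivAt_sin_smul_add_cos_smul (ht : HasDerivAt t (σ • (κ • n s)) s)
    (hb : HasDerivAt b (σ • (-(τ • n s))) s) (hθ : HasDerivAt θ θ' s) :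
    HasDerivAt (fun u => dualSin (θ u) • t u + dualCos (θ u) • b u)
      (θ' • (dualCos (θ s) • t s - dualSin (θ s) • b s)
        + (σ * (dualSin (θ s) * κ - dualCos (θ s) * τ)) • n s) s :=
  ((hθ.dualSin.fun_smul ht).fun_add (hθ.dualCos.fun_smul hb)).congr_deriv (by module)

end RotatedFrame

/-- Both curves are parameterized by a common real parameter with dual speeds `σ = ds̃/ds`,
`σ₁ = ds̃₁/ds`, and the conclusions are written multiplicatively. -/
theorem dual_mannheim_frame_relations_general
    (t n b t₁ n₁ b₁ : ℝ → D3)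
    (κ τ κ₁ τ₁ σ σ₁ θ θ' : ℝ → DualNumber ℝ)
    (ht : ∀ s, HasDerivAt t (σ s • (κ s • n s)) s)
    (hn : ∀ s, HasDerivAt n (σ s • (-(κ s • t s) + τ s • b s)) s)
    (hb : ∀ s, HasDerivAt b (σ s • (-(τ s • n s))) s)
    (ht₁ : ∀ s, HasDerivAt t₁ (σ₁ s • (κ₁ s • n₁ s)) s)
    (hn₁ : ∀ s, HasDerivAt n₁ (σ₁ s • (-(κ₁ s • t₁ s) + τ₁ s • b₁ s)) s)
    (hb₁ : ∀ s, HasDerivAt b₁ (σ₁ s • (-(τ₁ s • n₁ s))) s)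
    (hθ : ∀ s, HasDerivAt θ (θ' s) s)
    (hnb₁ : ∀ s, n s = b₁ s)
    (hframe₁ : ∀ s, t₁ s = dualCos (θ s) • t s - dualSin (θ s) • b s)
    (hframe₂ : ∀ s, n₁ s = dualSin (θ s) • t s + dualCos (θ s) • b s)
    (htunit : ∀ s, dualDot (t s) (t s) = 1)
    (hnunit : ∀ s, dualDot (n s) (n s) = 1)
    (hbunit : ∀ s, dualDot (b s) (b s) = 1)
    (htn : ∀ s, dualDot (t s) (n s) = 0)
    (htb : ∀ s, dualDot (t s) (b s) = 0)
    (hnb : ∀ s, dualDot (n s) (b s) = 0) :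
    (∀ s, κ₁ s * σ₁ s = -θ' s) ∧
    (∀ s, τ₁ s * σ₁ s =
      (dualSin (θ s) * κ s - dualCos (θ s) * τ s) * σ s) ∧
    (∀ s, κ s * σ s = dualSin (θ s) * τ₁ s * σ₁ s) ∧
    (∀ s, τ s * σ s = -(dualCos (θ s) * τ₁ s * σ₁ s)) := by
  have frame s : DualOrthonormal (t s) (n s) (b s) :=
    ⟨htunit s, hnunit s, hbunit s, htn s, htb s, hnb s⟩
  have frame₁ s : DualOrthonormal (t₁ s) (n₁ s) (n s) := by
    rw [hframe₁, hframe₂]; exact (frame s).rotate (θ s)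
  have eqT₁ s := (ht₁ s).unique
    (funext hframe₁ ▸ hasDerivAt_cos_smul_sub_sin_smul (ht s) (hb s) (hθ s))
  have eqN₁ s := (hn₁ s).unique
    (funext hframe₂ ▸ hasDerivAt_sin_smul_add_cos_smul (ht s) (hb s) (hθ s))
  have eqB₁ s := (hn s).unique (funext hnb₁ ▸ hb₁ s)
  refine ⟨fun s => ?_, fun s => ?_, fun s => ?_, fun s => ?_⟩
  · have h := congrArg (dualDot (n₁ s)) (eqT₁ s)
    rw [← hframe₂] at h
    simp only [dualDot_add_right, dualDot_smul_right, (frame₁ s).unit₂, (frame₁ s).orth₂₃] at h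
    linear_combination h
  · have h := congrArg (dualDot (n s)) (eqN₁ s)
    rw [← hframe₁, ← hnb₁] at h
    simp only [dualDot_add_right, dualDot_smul_right, dualDot_neg_right, (frame₁ s).unit₃,
      (frame₁ s).orth₃₁] at h
    linear_combination h
  · have h := congrArg (dualDot (t s)) (eqB₁ s)
    rw [hframe₂] at h
    simp only [dualDot_add_right, dualDot_smul_right, dualDot_neg_right, (frame s).unit₁,
      (frame s).orth₁₃] at h
    linear_combination -h
  · have h := congrArg (dualDot (b s)) (eqB₁ s)
    rw [hframe₂] at h
    simp only [dualDot_add_right, dualDot_smul_right, dualDot_neg_right, (frame s).unit₃,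
      (frame s).orth₃₁] at h
    linear_combination h

/-- For a dual Mannheim pair with frames related by
`t̃₁ = cos θ̃ t̃ − sin θ̃ b̃`, `ñ₁ = sin θ̃ t̃ + cos θ̃ b̃` (and `ñ` parallel to
`b̃₁`): `κ̃₁ = −dθ̃/ds̃₁`, `τ̃₁ = (sin θ̃ κ̃ − cos θ̃ τ̃) ds̃/ds̃₁`,
`κ̃ = sin θ̃ τ̃₁ ds̃₁/ds̃` and `τ̃ = −cos θ̃ τ̃₁ ds̃₁/ds̃`. Both curves are
parameterized by a common real parameter with dual speeds `σ = ds̃/ds`,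
`σ₁ = ds̃₁/ds`, and the conclusions are written multiplicatively. -/
theorem dual_mannheim_frame_relations
    (α α₁ t n b t₁ n₁ b₁ : ℝ → D3)
    (κ τ κ₁ τ₁ σ σ₁ θ θ' : ℝ → DualNumber ℝ)
    (hα : ∀ s, HasDerivAt α (σ s • t s) s)
    (ht : ∀ s, HasDerivAt t (σ s • (κ s • n s)) s)
    (hn : ∀ s, HasDerivAt n (σ s • (-(κ s • t s) + τ s • b s)) s)
    (hb : ∀ s, HasDerivAt b (σ s • (-(τ s • n s))) s)
    (hα₁ : ∀ s, HasDerivAt α₁ (σ₁ s • t₁ s) s)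
    (ht₁ : ∀ s, HasDerivAt t₁ (σ₁ s • (κ₁ s • n₁ s)) s)
    (hn₁ : ∀ s, HasDerivAt n₁ (σ₁ s • (-(κ₁ s • t₁ s) + τ₁ s • b₁ s)) s)
    (hb₁ : ∀ s, HasDerivAt b₁ (σ₁ s • (-(τ₁ s • n₁ s))) s)
    (hθ : ∀ s, HasDerivAt θ (θ' s) s)
    (hnb₁ : ∀ s, n s = b₁ s)
    (hframe₁ : ∀ s, t₁ s = dualCos (θ s) • t s - dualSin (θ s) • b s)
    (hframe₂ : ∀ s, n₁ s = dualSin (θ s) • t s + dualCos (θ s) • b s)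
    (htunit : ∀ s, dualDot (t s) (t s) = 1)
    (hnunit : ∀ s, dualDot (n s) (n s) = 1)
    (hbunit : ∀ s, dualDot (b s) (b s) = 1)
    (htn : ∀ s, dualDot (t s) (n s) = 0)
    (htb : ∀ s, dualDot (t s) (b s) = 0)
    (hnb : ∀ s, dualDot (n s) (b s) = 0) :
    (∀ s, κ₁ s * σ₁ s = -θ' s) ∧
    (∀ s, τ₁ s * σ₁ s =
      (dualSin (θ s) * κ s - dualCos (θ s) * τ s) * σ s) ∧
    (∀ s, κ s * σ s = dualSin (θ s) * τ₁ s * σ₁ s) ∧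
    (∀ s, τ s * σ s = -(dualCos (θ s) * τ₁ s * σ₁ s)) :=
  dual_mannheim_frame_relations_general t n b t₁ n₁ b₁ κ τ κ₁ τ₁ σ σ₁ θ θ' ht hn hb ht₁ hn₁ hb₁ hθ
    hnb₁ hframe₁ hframe₂ htunit hnunit hbunit htn htb hnb
end
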